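/- At the feasible point of P1 given by τ* = U+G, q_{jk}^{up*} = Υ_j (1 + η_{jk} P)/((U+G) η_{jk}²), and q_j^{dl*} = (Γ/(N Υ_j))·(1 + Σ_{t=1}^{K_j} x_{jt}* η_{jt}) with x_{jk}* = Υ_j (1 + η_{jk} P)/η_{jk}², one has SINR_{jk} = Γ for every group j and every user k; in particular, all multicast users attain exactly the same spectral efficiency SE_{jk} = (1 − (U+G)/T)·log₂(1 + Γ). -/

import Mathlib

open Finset

noncomputable section

/-- Effective estimation quality `ξ_{jk} = τ q_{jk}^{up} η_{jk}² / (1 + Σ_t τ q_{jt}^{up} η_{jt})`. -/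
def xiMu {G : ℕ} {K : Fin G → ℕ} (η : ∀ j : Fin G, Fin (K j) → ℝ)
    (τ : ℕ) (qup : ∀ j : Fin G, Fin (K j) → ℝ) (j : Fin G) (k : Fin (K j)) : ℝ :=
  (τ : ℝ) * qup j k * (η j k) ^ 2 / (1 + ∑ t, (τ : ℝ) * qup j t * η j t)

/-- `SINR_{jk} = N q_j^{dl} ξ_{jk} / (1 + η_{jk} (P_un + Σ_i q_i^{dl}))`. -/
def sinrMu {G : ℕ} {K : Fin G → ℕ} (N : ℕ) (Pun : ℝ)
    (η : ∀ j : Fin G, Fin (K j) → ℝ) (τ : ℕ)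
    (qup : ∀ j : Fin G, Fin (K j) → ℝ) (qdl : Fin G → ℝ)
    (j : Fin G) (k : Fin (K j)) : ℝ :=
  (N : ℝ) * qdl j * xiMu η τ qup j k / (1 + η j k * (Pun + ∑ i, qdl i))

/-- `SE_{jk} = (1 - τ/T) log₂(1 + SINR_{jk})`. -/
def seMu {G : ℕ} {K : Fin G → ℕ} (N T : ℕ) (Pun : ℝ)
    (η : ∀ j : Fin G, Fin (K j) → ℝ) (τ : ℕ)
    (qup : ∀ j : Fin G, Fin (K j) → ℝ) (qdl : Fin G → ℝ)
    (j : Fin G) (k : Fin (K j)) : ℝ :=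
  (1 - (τ : ℝ) / (T : ℝ)) * Real.logb 2 (1 + sinrMu N Pun η τ qup qdl j k)

/-- The max–min fairness objective `min_{j,k} SE_{jk}` of problem P1. -/
def objMu {G : ℕ} {K : Fin G → ℕ} (N T : ℕ) (Pun : ℝ)
    (η : ∀ j : Fin G, Fin (K j) → ℝ) (τ : ℕ)
    (qup : ∀ j : Fin G, Fin (K j) → ℝ) (qdl : Fin G → ℝ) : ℝ :=
  ⨅ j : Fin G, ⨅ k : Fin (K j), seMu N T Pun η τ qup qdl j k

/-- Feasibility for problem P1 with fixed unicast power `Pun`. -/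
def feasMu {G : ℕ} {K : Fin G → ℕ} (U T : ℕ) (P Pun : ℝ)
    (E : ∀ j : Fin G, Fin (K j) → ℝ) (τ : ℕ)
    (qup : ∀ j : Fin G, Fin (K j) → ℝ) (qdl : Fin G → ℝ) : Prop :=
  U + G ≤ τ ∧ τ ≤ T ∧
    (∀ j k, 0 ≤ qup j k ∧ (τ : ℝ) * qup j k ≤ E j k) ∧
    (∀ j, 0 ≤ qdl j) ∧ ∑ j, qdl j ≤ P - Pun

/-- `Υ_j = min_k E_{jk} η_{jk}² / (1 + η_{jk} P)`. -/
def UpsMu {G : ℕ} {K : Fin G → ℕ} (P : ℝ)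
    (η E : ∀ j : Fin G, Fin (K j) → ℝ) (j : Fin G) : ℝ :=
  ⨅ k : Fin (K j), E j k * (η j k) ^ 2 / (1 + η j k * P)

/-- `Γ = P_mu N / (P Σ_j K_j + Σ_j 1/Υ_j + Σ_j Σ_t 1/η_{jt})` with `P_mu = P - P_un`. -/
def GamMu {G : ℕ} {K : Fin G → ℕ} (N : ℕ) (P Pun : ℝ)
    (η E : ∀ j : Fin G, Fin (K j) → ℝ) : ℝ :=
  (P - Pun) * (N : ℝ) /
    (P * ∑ j, (K j : ℝ) + ∑ j, 1 / UpsMu P η E j + ∑ j, ∑ t, 1 / η j t)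

/-- `x_{jk}* = Υ_j (1 + η_{jk} P) / η_{jk}²`. -/
def xStarMu {G : ℕ} {K : Fin G → ℕ} (P : ℝ)
    (η E : ∀ j : Fin G, Fin (K j) → ℝ) (j : Fin G) (k : Fin (K j)) : ℝ :=
  UpsMu P η E j * (1 + η j k * P) / (η j k) ^ 2

/-- `q_{jk}^{up*} = Υ_j (1 + η_{jk} P) / ((U+G) η_{jk}²)`. -/
def qupStarMu (U : ℕ) {G : ℕ} {K : Fin G → ℕ} (P : ℝ)
    (η E : ∀ j : Fin G, Fin (K j) → ℝ) (j : Fin G) (k : Fin (K j)) : ℝ :=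
  xStarMu P η E j k / ((U + G : ℕ) : ℝ)

/-- `q_j^{dl*} = (Γ/(N Υ_j)) (1 + Σ_t x_{jt}* η_{jt})`. -/
def qdlStarMu {G : ℕ} {K : Fin G → ℕ} (N : ℕ) (P Pun : ℝ)
    (η E : ∀ j : Fin G, Fin (K j) → ℝ) (j : Fin G) : ℝ :=
  GamMu N P Pun η E / ((N : ℝ) * UpsMu P η E j) * (1 + ∑ t, xStarMu P η E j t * η j t)

/-! With `τ = U + G` the uplink powers make `τ q_{jk}^{up} = x_{jk}^*`, and `x_{jk}^* η_{jk}² = Υ_j (1 + η_{jk} P)`,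
so `ξ_{jk} = Υ_j (1 + η_{jk} P) / S_j` with `S_j = 1 + Σ_t x_{jt}^* η_{jt}`. The downlink power `q_j^{dl*}` is
`Γ S_j / (N Υ_j)`, which cancels `S_j / Υ_j` and leaves the numerator `N q_j^{dl*} ξ_{jk} = Γ (1 + η_{jk} P)`.
Since `S_j / Υ_j = 1/Υ_j + Σ_t 1/η_{jt} + P K_j` sums over `j` to the denominator of `Γ`, the downlink powers
spend exactly `P - P_un`, so the interference term is `1 + η_{jk} P` as well. -/

section

variable {G : ℕ} {K : Fin G → ℕ} {P : ℝ} {η E : ∀ j : Fin G, Fin (K j) → ℝ}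

lemma upsMu_pos {j : Fin G} (hK : 1 ≤ K j) (hP : 0 ≤ P) (hη : ∀ k, 0 < η j k)
    (hE : ∀ k, 0 < E j k) : 0 < UpsMu P η E j := by
  have : Nonempty (Fin (K j)) := ⟨⟨0, hK⟩⟩
  obtain ⟨k, hk⟩ := exists_eq_ciInf_of_finite
    (f := fun k : Fin (K j) => E j k * η j k ^ 2 / (1 + η j k * P))
  rw [UpsMu, ← hk]
  have := hη k
  have := hE k
  positivity

lemma xStarMu_mul_sq {j : Fin G} {k : Fin (K j)} (hη : η j k ≠ 0) :
    xStarMu P η E j k * η j k ^ 2 = UpsMu P η E j * (1 + η j k * P) := by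
  rw [xStarMu]
  field_simp

lemma sum_xStarMu_mul {j : Fin G} (hη : ∀ k, η j k ≠ 0) :
    ∑ t, xStarMu P η E j t * η j t = UpsMu P η E j * (∑ t, 1 / η j t + P * K j) := by
  have hterm : ∀ t, xStarMu P η E j t * η j t = UpsMu P η E j * (1 / η j t + P) := fun t => by
    rw [xStarMu]
    field_simp [hη t]
  simp only [hterm, ← mul_sum, sum_add_distrib, sum_const, card_univ, Fintype.card_fin,
    nsmul_eq_mul, mul_comm P]

lemma natCast_mul_qupStarMu (U : ℕ) (j : Fin G) (k : Fin (K j)) :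
    ((U + G : ℕ) : ℝ) * qupStarMu U P η E j k = xStarMu P η E j k := by
  have : ((U + G : ℕ) : ℝ) ≠ 0 := by
    have := j.pos
    positivity
  rw [qupStarMu, mul_div_cancel₀ _ this]

lemma xiMu_qupStarMu (U : ℕ) {j : Fin G} {k : Fin (K j)} (hη : η j k ≠ 0) :
    xiMu η (U + G) (qupStarMu U P η E) j k
      = UpsMu P η E j * (1 + η j k * P) / (1 + ∑ t, xStarMu P η E j t * η j t) := by
  simp only [xiMu, natCast_mul_qupStarMu, xStarMu_mul_sq hη]

lemma qdlStarMu_eq (N : ℕ) (Pun : ℝ) {j : Fin G} (hU : UpsMu P η E j ≠ 0)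
    (hη : ∀ k, η j k ≠ 0) :
    qdlStarMu N P Pun η E j
      = GamMu N P Pun η E / N * (1 / UpsMu P η E j + ∑ t, 1 / η j t + P * K j) := by
  rw [qdlStarMu, sum_xStarMu_mul hη]
  field_simp
  ring

lemma natCast_mul_qdlStarMu_mul_xiMu (U : ℕ) {N : ℕ} (Pun : ℝ) {j : Fin G} (k : Fin (K j))
    (hN : N ≠ 0) (hK : 1 ≤ K j) (hP : 0 ≤ P) (hη : ∀ k, 0 < η j k) (hE : ∀ k, 0 < E j k) :
    (N : ℝ) * qdlStarMu N P Pun η E j * xiMu η (U + G) (qupStarMu U P η E) j k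
      = GamMu N P Pun η E * (1 + η j k * P) := by
  have hU := upsMu_pos hK hP hη hE
  have hS : 0 < 1 + ∑ t, xStarMu P η E j t * η j t := by
    rw [sum_xStarMu_mul fun t => (hη t).ne']
    have : 0 ≤ ∑ t, 1 / η j t := sum_nonneg fun t _ => (one_div_pos.mpr (hη t)).le
    positivity
  rw [qdlStarMu, xiMu_qupStarMu U (hη k).ne']
  field_simp

lemma sum_qdlStarMu [Nonempty (Fin G)] {N : ℕ} (Pun : ℝ) (hN : N ≠ 0) (hK : ∀ j, 1 ≤ K j)
    (hP : 0 ≤ P) (hη : ∀ j k, 0 < η j k) (hE : ∀ j k, 0 < E j k) :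
    ∑ j, qdlStarMu N P Pun η E j = P - Pun := by
  have hU j : 0 < UpsMu P η E j := upsMu_pos (hK j) hP (hη j) (hE j)
  set D := P * ∑ j, (K j : ℝ) + ∑ j, 1 / UpsMu P η E j + ∑ j, ∑ t, 1 / η j t with hD
  have hDpos : 0 < D := by
    have : 0 < ∑ j, 1 / UpsMu P η E j :=
      sum_pos (fun j _ => one_div_pos.mpr (hU j)) univ_nonempty
    have : 0 ≤ ∑ j, ∑ t, 1 / η j t :=
      sum_nonneg fun j _ => sum_nonneg fun t _ => (one_div_pos.mpr (hη j t)).le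
    positivity
  have hsplit : ∑ j, (1 / UpsMu P η E j + ∑ t, 1 / η j t + P * K j) = D := by
    rw [hD, sum_add_distrib, sum_add_distrib, mul_sum]
    ring
  calc ∑ j, qdlStarMu N P Pun η E j
      = GamMu N P Pun η E / N * D := by
        rw [← hsplit, mul_sum]
        exact sum_congr rfl fun j _ => qdlStarMu_eq N Pun (hU j).ne' fun t => (hη j t).ne'
    _ = P - Pun := by
        rw [GamMu, ← hD]
        field_simp

end

theorem mmf_optimal_point_equal_sinr_general
    (U G : ℕ) (K : Fin G → ℕ) (hK : ∀ j, 1 ≤ K j)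
    (N : ℕ) (hN : 1 ≤ N) (T : ℕ)
    (P : ℝ) (hP : 0 < P)
    (η E : ∀ j : Fin G, Fin (K j) → ℝ)
    (hη : ∀ j k, 0 < η j k) (hE : ∀ j k, 0 < E j k)
    (Pun : ℝ) :
    (∀ (j : Fin G) (k : Fin (K j)),
      sinrMu N Pun η (U + G) (qupStarMu U P η E) (qdlStarMu N P Pun η E) j k
        = GamMu N P Pun η E) ∧
    (∀ (j : Fin G) (k : Fin (K j)),
      seMu N T Pun η (U + G) (qupStarMu U P η E) (qdlStarMu N P Pun η E) j k
        = (1 - ((U + G : ℕ) : ℝ) / (T : ℝ)) * Real.logb 2 (1 + GamMu N P Pun η E)) := by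
  have hN0 : N ≠ 0 := Nat.one_le_iff_ne_zero.mp hN
  have hsinr : ∀ j k,
      sinrMu N Pun η (U + G) (qupStarMu U P η E) (qdlStarMu N P Pun η E) j k
        = GamMu N P Pun η E := by
    intro j k
    have : Nonempty (Fin G) := ⟨j⟩
    have hinterference : 1 + η j k * (Pun + ∑ i, qdlStarMu N P Pun η E i) = 1 + η j k * P := by
      rw [sum_qdlStarMu Pun hN0 hK hP.le hη hE]
      ring
    rw [sinrMu, natCast_mul_qdlStarMu_mul_xiMu U Pun k hN0 (hK j) hP.le (hη j) (hE j),
      hinterference, mul_div_cancel_right₀ _ (by have := hη j k; positivity)]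
  exact ⟨hsinr, fun j k => by rw [seMu, hsinr j k]⟩

/-- at the feasible point `τ* = U+G`,
`q_{jk}^{up*} = Υ_j (1+η_{jk}P)/((U+G) η_{jk}²)`,
`q_j^{dl*} = (Γ/(N Υ_j))(1 + Σ_t x_{jt}* η_{jt})`, every multicast user has
`SINR_{jk} = Γ`; in particular all multicast users attain exactly the same
spectral efficiency `SE_{jk} = (1 - (U+G)/T) log₂(1 + Γ)`. -/
theorem mmf_optimal_point_equal_sinr
    (U G : ℕ) (hG : 1 ≤ G) (K : Fin G → ℕ) (hK : ∀ j, 1 ≤ K j)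
    (N : ℕ) (hN : 1 ≤ N) (T : ℕ) (hT : U + G ≤ T)
    (P : ℝ) (hP : 0 < P)
    (η E : ∀ j : Fin G, Fin (K j) → ℝ)
    (hη : ∀ j k, 0 < η j k) (hE : ∀ j k, 0 < E j k)
    (Pun : ℝ) (hPun0 : 0 ≤ Pun) (hPunP : Pun ≤ P) :
    (∀ (j : Fin G) (k : Fin (K j)),
      sinrMu N Pun η (U + G) (qupStarMu U P η E) (qdlStarMu N P Pun η E) j k
        = GamMu N P Pun η E) ∧
    (∀ (j : Fin G) (k : Fin (K j)),
      seMu N T Pun η (U + G) (qupStarMu U P η E) (qdlStarMu N P Pun η E) j k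
        = (1 - ((U + G : ℕ) : ℝ) / (T : ℝ)) * Real.logb 2 (1 + GamMu N P Pun η E)) :=
  mmf_optimal_point_equal_sinr_general U G K hK N hN T P hP η E hη hE Pun
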